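/- For all y₁, y₂ ∈ U and every x ∈ [0, h], sup_{0 ≤ ω ≤ x} |(Ay₁)(ω) − (Ay₂)(ω)| ≤ (L (x^ρ/ρ)^α / Γ(1+α)) · sup_{0 ≤ ω ≤ x} |y₁(ω) − y₂(ω)|. -/

import Mathlib

/-!
The kernel `(x^ρ - t^ρ)^(α-1) t^(ρ-1)` is nonnegative on `[0, x]` and has the explicit primitive
`-(x^ρ - t^ρ)^α / (ρ α)`, so the Katugampola integral of the constant `1` is
`(x^ρ/ρ)^α / Γ(1+α)`. Since `A y₁ - A y₂` is the Katugampola integral of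
`f(t, y₁ t) - f(t, y₂ t)`, which the Lipschitz condition bounds pointwise by `L · sup |y₁ - y₂|`,
positivity of the kernel gives the estimate at each `ω ≤ x`, and the constant is monotone in `ω`.
-/

open Set MeasureTheory intervalIntegral

noncomputable def katugampolaKernel (ρ α x t : ℝ) : ℝ := (x ^ ρ - t ^ ρ) ^ (α - 1) * t ^ (ρ - 1)

noncomputable def katugampolaIntegral (ρ α : ℝ) (g : ℝ → ℝ) (x : ℝ) : ℝ :=
  ρ ^ (1 - α) / Real.Gamma α * ∫ t in (0:ℝ)..x, katugampolaKernel ρ α x t * g t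

variable {ρ α x : ℝ}

lemma katugampolaKernel_nonneg (hρ : 0 ≤ ρ) {t : ℝ} (ht : t ∈ Icc 0 x) :
    0 ≤ katugampolaKernel ρ α x t :=
  mul_nonneg (Real.rpow_nonneg (sub_nonneg.2 (Real.rpow_le_rpow ht.1 ht.2 hρ)) _)
    (Real.rpow_nonneg ht.1 _)

lemma hasDerivAt_katugampolaKernel_primitive (hρ : 0 < ρ) (hα : 0 < α) {t : ℝ}
    (ht : t ∈ Ioo 0 x) :
    HasDerivAt (fun s => -(x ^ ρ - s ^ ρ) ^ α / (ρ * α)) (katugampolaKernel ρ α x t) t := by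
  have hpos : 0 < x ^ ρ - t ^ ρ := sub_pos.2 (Real.rpow_lt_rpow ht.1.le ht.2 hρ)
  have hd := (((Real.hasDerivAt_rpow_const (p := ρ) (Or.inl ht.1.ne')).const_sub
    (x ^ ρ)).rpow_const (p := α) (Or.inl hpos.ne')).neg.div_const (ρ * α)
  refine hd.congr_deriv ?_
  rw [katugampolaKernel]
  field_simp

lemma continuousOn_katugampolaKernel_primitive (hρ : 0 < ρ) (hα : 0 < α) :
    ContinuousOn (fun s => -(x ^ ρ - s ^ ρ) ^ α / (ρ * α)) (Icc 0 x) := by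
  intro s hs
  have hpow : ContinuousAt (fun s : ℝ => s ^ ρ) s :=
    Real.continuousAt_rpow_const _ _ (Or.inr hρ.le)
  exact (((continuousAt_const.sub hpow).rpow_const (Or.inr hα.le)).neg.div_const _)
    |>.continuousWithinAt

lemma intervalIntegrable_katugampolaKernel (hρ : 0 < ρ) (hα : 0 < α) (hx : 0 ≤ x) :
    IntervalIntegrable (katugampolaKernel ρ α x) volume 0 x :=
  (intervalIntegrable_iff_integrableOn_Ioc_of_le hx).2 <|
    integrableOn_deriv_of_nonneg (continuousOn_katugampolaKernel_primitive hρ hα)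
      (fun _ ht => hasDerivAt_katugampolaKernel_primitive hρ hα ht)
      (fun _ ht => katugampolaKernel_nonneg hρ.le (Ioo_subset_Icc_self ht))

lemma integral_katugampolaKernel (hρ : 0 < ρ) (hα : 0 < α) (hx : 0 ≤ x) :
    ∫ t in (0:ℝ)..x, katugampolaKernel ρ α x t = (x ^ ρ) ^ α / (ρ * α) := by
  rw [integral_eq_sub_of_hasDerivAt_of_le hx (continuousOn_katugampolaKernel_primitive hρ hα)
    (fun _ ht => hasDerivAt_katugampolaKernel_primitive hρ hα ht)
    (intervalIntegrable_katugampolaKernel hρ hα hx)]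
  simp [Real.zero_rpow hρ.ne', Real.zero_rpow hα.ne', neg_div]

lemma katugampolaIntegral_one (hρ : 0 < ρ) (hα : 0 < α) (hx : 0 ≤ x) :
    katugampolaIntegral ρ α (fun _ => 1) x = (x ^ ρ / ρ) ^ α / Real.Gamma (1 + α) := by
  simp only [katugampolaIntegral, mul_one, integral_katugampolaKernel hρ hα hx]
  rw [add_comm, Real.Gamma_add_one hα.ne', Real.div_rpow (Real.rpow_nonneg hx ρ) hρ.le,
    Real.rpow_sub hρ, Real.rpow_one]
  have hΓ := Real.Gamma_pos_of_pos hα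
  have hρα := Real.rpow_pos_of_pos hρ α
  field_simp

lemma abs_katugampolaIntegral_sub_le (hρ : 0 < ρ) (hα : 0 < α) (hx : 0 ≤ x) {g₁ g₂ : ℝ → ℝ}
    (hg₁ : ContinuousOn g₁ (Icc 0 x)) (hg₂ : ContinuousOn g₂ (Icc 0 x)) {c : ℝ}
    (hc : ∀ t ∈ Icc 0 x, |g₁ t - g₂ t| ≤ c) :
    |katugampolaIntegral ρ α g₁ x - katugampolaIntegral ρ α g₂ x| ≤
      c * ((x ^ ρ / ρ) ^ α / Real.Gamma (1 + α)) := by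
  have hk := intervalIntegrable_katugampolaKernel hρ hα hx
  have hconst : 0 ≤ ρ ^ (1 - α) / Real.Gamma α :=
    div_nonneg (Real.rpow_nonneg hρ.le _) (Real.Gamma_pos_of_pos hα).le
  have hint : |∫ t in (0:ℝ)..x, katugampolaKernel ρ α x t * (g₁ t - g₂ t)| ≤
      ∫ t in (0:ℝ)..x, c * katugampolaKernel ρ α x t := by
    rw [← Real.norm_eq_abs]
    refine norm_integral_le_of_norm_le hx (ae_of_all _ fun t ht => ?_) (hk.const_mul c)
    have ht' : t ∈ Icc 0 x := Ioc_subset_Icc_self ht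
    rw [Real.norm_eq_abs, abs_mul, abs_of_nonneg (katugampolaKernel_nonneg hρ.le ht'), mul_comm]
    exact mul_le_mul_of_nonneg_right (hc t ht') (katugampolaKernel_nonneg hρ.le ht')
  have hsub : katugampolaIntegral ρ α g₁ x - katugampolaIntegral ρ α g₂ x =
      ρ ^ (1 - α) / Real.Gamma α *
        ∫ t in (0:ℝ)..x, katugampolaKernel ρ α x t * (g₁ t - g₂ t) := by
    simp only [katugampolaIntegral, mul_sub]
    rw [← mul_sub, intervalIntegral.integral_sub (hk.mul_continuousOn (by rwa [uIcc_of_le hx]))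
      (hk.mul_continuousOn (by rwa [uIcc_of_le hx]))]
  calc |katugampolaIntegral ρ α g₁ x - katugampolaIntegral ρ α g₂ x|
      ≤ ρ ^ (1 - α) / Real.Gamma α * ∫ t in (0:ℝ)..x, c * katugampolaKernel ρ α x t := by
        rw [hsub, abs_mul, abs_of_nonneg hconst]
        exact mul_le_mul_of_nonneg_left hint hconst
    _ = c * ((x ^ ρ / ρ) ^ α / Real.Gamma (1 + α)) := by
        rw [← katugampolaIntegral_one hρ hα hx, katugampolaIntegral,
          intervalIntegral.integral_const_mul]
        simp only [mul_one]
        ring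

theorem stmt13_general
    (ρ α : ℝ) (hρ : 0 < ρ) (hα : 0 < α)
    (K hstar : ℝ)
    (T : ℝ → ℝ)
    (f : ℝ → ℝ → ℝ)
    (G : Set (ℝ × ℝ))
    (hG : G = {p : ℝ × ℝ | p.1 ∈ Set.Icc 0 hstar ∧ |p.2 - T p.1| ≤ K})
    (hf : ContinuousOn (fun p : ℝ × ℝ => f p.1 p.2) G)
    (M : ℝ)
    (h : ℝ)
    (hh : h = if M = 0 then hstar
      else min hstar ((K * Real.Gamma (α + 1) * ρ ^ α / M) ^ (1 / α)))
    (A : (ℝ → ℝ) → ℝ → ℝ)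
    (hA : ∀ (y : ℝ → ℝ) (x : ℝ), A y x = T x + ρ ^ (1 - α) / Real.Gamma α *
      ∫ t in (0:ℝ)..x, (x ^ ρ - t ^ ρ) ^ (α - 1) * t ^ (ρ - 1) * f t (y t))
    (L : ℝ) (hL : 0 < L)
    (hLip : ∀ x y₁ y₂ : ℝ, (x, y₁) ∈ G → (x, y₂) ∈ G → |f x y₁ - f x y₂| ≤ L * |y₁ - y₂|)
    (y₁ y₂ : ℝ → ℝ)
    (hy₁ : ContinuousOn y₁ (Set.Icc 0 h) ∧ ∀ s ∈ Set.Icc 0 h, |y₁ s - T s| ≤ K)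
    (hy₂ : ContinuousOn y₂ (Set.Icc 0 h) ∧ ∀ s ∈ Set.Icc 0 h, |y₂ s - T s| ≤ K)
    (x : ℝ) (hx : x ∈ Set.Icc 0 h) :
    sSup ((fun ω => |A y₁ ω - A y₂ ω|) '' Set.Icc 0 x) ≤
      L * (x ^ ρ / ρ) ^ α / Real.Gamma (1 + α) *
        sSup ((fun ω => |y₁ ω - y₂ ω|) '' Set.Icc 0 x) := by
  have hxh : Icc 0 x ⊆ Icc 0 h := Icc_subset_Icc_right hx.2
  have hh_le : h ≤ hstar := by rw [hh]; split_ifs <;> simp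
  have hgraph {y : ℝ → ℝ} (hy : ∀ s ∈ Icc 0 h, |y s - T s| ≤ K) {t : ℝ} (ht : t ∈ Icc 0 x) :
      (t, y t) ∈ G := hG ▸ ⟨⟨ht.1, (hxh ht).2.trans hh_le⟩, hy t (hxh ht)⟩
  have hcomp {y : ℝ → ℝ} (hy : ContinuousOn y (Icc 0 h) ∧ ∀ s ∈ Icc 0 h, |y s - T s| ≤ K) :
      ContinuousOn (fun t => f t (y t)) (Icc 0 x) :=
    hf.comp (continuousOn_id.prodMk (hy.1.mono hxh)) fun _ ht => hgraph hy.2 ht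
  have hdiff : ContinuousOn (fun t => y₁ t - y₂ t) (Icc 0 x) := (hy₁.1.sub hy₂.1).mono hxh
  set S := sSup ((fun ω => |y₁ ω - y₂ ω|) '' Icc 0 x)
  have hS : 0 ≤ S := (abs_nonneg _).trans (hdiff.abs.le_sSup_image_Icc ⟨le_rfl, hx.1⟩)
  have hΓ : 0 < Real.Gamma (1 + α) := Real.Gamma_pos_of_pos (by linarith)
  have hx₀ := hx.1
  refine Real.sSup_le ?_ (by positivity)
  rintro _ ⟨ω, hω, rfl⟩
  have hωx : Icc 0 ω ⊆ Icc 0 x := Icc_subset_Icc_right hω.2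
  have hA' (y : ℝ → ℝ) : A y ω = T ω + katugampolaIntegral ρ α (fun t => f t (y t)) ω := hA y ω
  calc |A y₁ ω - A y₂ ω|
      ≤ L * S * ((ω ^ ρ / ρ) ^ α / Real.Gamma (1 + α)) := by
        rw [hA', hA', add_sub_add_left_eq_sub]
        refine abs_katugampolaIntegral_sub_le hρ hα hω.1 ((hcomp hy₁).mono hωx)
          ((hcomp hy₂).mono hωx) fun t ht => ?_
        exact (hLip t _ _ (hgraph hy₁.2 (hωx ht)) (hgraph hy₂.2 (hωx ht))).trans
          (mul_le_mul_of_nonneg_left (hdiff.abs.le_sSup_image_Icc (hωx ht)) hL.le)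
    _ ≤ L * (x ^ ρ / ρ) ^ α / Real.Gamma (1 + α) * S := by
        rw [mul_right_comm, mul_div_assoc]
        have hω₀ := hω.1
        gcongr
        exact hω.2

theorem stmt13
    (ρ α : ℝ) (hρ : 0 < ρ) (hα : 0 < α)
    (m : ℕ) (hm : m = ⌈α⌉₊)
    (y₀ : ℕ → ℝ) (K hstar : ℝ) (hK : 0 < K) (hhstar : 0 < hstar)
    (T : ℝ → ℝ)
    (hT : ∀ x : ℝ, T x = ∑ k ∈ Finset.range m, x ^ k / (Nat.factorial k) * y₀ k)
    (f : ℝ → ℝ → ℝ)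
    (G : Set (ℝ × ℝ))
    (hG : G = {p : ℝ × ℝ | p.1 ∈ Set.Icc 0 hstar ∧ |p.2 - T p.1| ≤ K})
    (hf : ContinuousOn (fun p : ℝ × ℝ => f p.1 p.2) G)
    (M : ℝ) (hM : M = sSup ((fun p : ℝ × ℝ => |f p.1 p.2|) '' G))
    (h : ℝ)
    (hh : h = if M = 0 then hstar
      else min hstar ((K * Real.Gamma (α + 1) * ρ ^ α / M) ^ (1 / α)))
    (A : (ℝ → ℝ) → ℝ → ℝ)
    (hA : ∀ (y : ℝ → ℝ) (x : ℝ), A y x = T x + ρ ^ (1 - α) / Real.Gamma α *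
      ∫ t in (0:ℝ)..x, (x ^ ρ - t ^ ρ) ^ (α - 1) * t ^ (ρ - 1) * f t (y t))
    (L : ℝ) (hL : 0 < L)
    (hLip : ∀ x y₁ y₂ : ℝ, (x, y₁) ∈ G → (x, y₂) ∈ G → |f x y₁ - f x y₂| ≤ L * |y₁ - y₂|)
    (y₁ y₂ : ℝ → ℝ)
    (hy₁ : ContinuousOn y₁ (Set.Icc 0 h) ∧ ∀ s ∈ Set.Icc 0 h, |y₁ s - T s| ≤ K)
    (hy₂ : ContinuousOn y₂ (Set.Icc 0 h) ∧ ∀ s ∈ Set.Icc 0 h, |y₂ s - T s| ≤ K)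
    (x : ℝ) (hx : x ∈ Set.Icc 0 h) :
    sSup ((fun ω => |A y₁ ω - A y₂ ω|) '' Set.Icc 0 x) ≤
      L * (x ^ ρ / ρ) ^ α / Real.Gamma (1 + α) *
        sSup ((fun ω => |y₁ ω - y₂ ω|) '' Set.Icc 0 x) :=
  stmt13_general ρ α hρ hα K hstar T f G hG hf M h hh A hA L hL hLip y₁ y₂ hy₁ hy₂ x hx
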